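/- Suppose the outcomes Y_i have finite support 𝒴 = {y₁, …, y_k}, μ is the counting measure on 𝒴, and the covariate sequence satisfies X_i → γ ∈ 𝒳 almost surely, where 𝒳 ⊆ ℝ need not be compact. Let Θ₀ ⊆ Θ ⊆ ℝ^p be compact, suppose f_θ(y|x) > 0 on 𝒳 × Θ₀ × 𝒴, and suppose that for each y ∈ 𝒴 the map (x, θ) ↦ √f_θ(y|x) is continuous on 𝒳 × Θ₀ and has continuous first and second partial derivatives there. Then for any θ in the interior of Θ₀ and any h ∈ ℝ^p, ∑_{i=1}^n D_{θ,h/√n}(X_i) → 0 almost surely as n → ∞; in particular, ∑_{i=1}^n D_{θ,h/√n}(X_i) → 0 in probability. -/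

import Mathlib

open Filter MeasureTheory

/-- The directional derivative `h^T u_θ(y|x)` of `θ ↦ log f_θ(y|x)` in direction `h`,
where `u_θ(y|x) = ∂ log f_θ(y|x)/∂θ` is the conditional score. -/
noncomputable def scoreDir {p : ℕ} {Y : Type*} (f : (Fin p → ℝ) → ℝ → Y → ℝ)
    (θ h : Fin p → ℝ) (x : ℝ) (y : Y) : ℝ :=
  fderiv ℝ (fun t => Real.log (f t x y)) θ h

/-- `D_{θ,h}(x)` for counting measure on a finite outcome space `Y`:
`∑_{y∈𝒴} (√f_{θ+h}(y|x) − √f_θ(y|x) − (1/2) h^T u_θ(y|x) √f_θ(y|x))²`. -/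
noncomputable def DqmFin {p : ℕ} {Y : Type*} [Fintype Y]
    (f : (Fin p → ℝ) → ℝ → Y → ℝ) (θ h : Fin p → ℝ) (x : ℝ) : ℝ :=
  ∑ y : Y, (Real.sqrt (f (θ + h) x y) - Real.sqrt (f θ x y) -
    (1 / 2) * scoreDir f θ h x y * Real.sqrt (f θ x y)) ^ 2

/-! Write `g_y(x, t) = √f_t(y|x)`. Where `f > 0` the score is `2 ∂ₜg_y / g_y`, so
`D_{θ,w}(x) = ∑_y (g_y(x, θ + w) - g_y(x, θ) - ∂ₜg_y(x, θ) w)²`. Along a sample path the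
covariates together with their limit `γ` form a compact set `K ⊆ 𝒳`. As `∂ₜg_y` is jointly
continuous, the mean value theorem makes this remainder `o(‖w‖)` uniformly in `x ∈ K`, hence
`D_{θ,w} = o(‖w‖²)` uniformly on `K`; for `w = h/√n` each of the `n` summands is `o(1/n)`.
Continuity of `D_{θ,w}` in `x` gives measurability, so almost sure convergence implies
convergence in probability. -/

open Function Asymptotics Topology

theorem IsCompact.eventually_forall_norm_sub_lt {X T G : Type*} [TopologicalSpace X]
    [TopologicalSpace T] [SeminormedAddCommGroup G] {φ : X × T → G} {K : Set X} {U : Set T}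
    {θ : T} (hK : IsCompact K) (hU : U ∈ 𝓝 θ) (hφ : ContinuousOn φ (K ×ˢ U)) {c : ℝ}
    (hc : 0 < c) : ∀ᶠ t in 𝓝 θ, ∀ x ∈ K, ‖φ (x, t) - φ (x, θ)‖ < c := by
  have hθ : θ ∈ U := mem_of_mem_nhds hU
  suffices ∀ᶠ t in 𝓝 θ, ∀ x ∈ K, x ∈ K → ‖φ (x, t) - φ (x, θ)‖ < c from
    this.mono fun t ht x hx => ht x hx hx
  refine hK.eventually_forall_of_forall_eventually fun x hx => ?_
  have hnear : ∀ᶠ q in 𝓝[K ×ˢ U] (x, θ), dist (φ q) (φ (x, θ)) < c / 2 :=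
    hφ _ ⟨hx, hθ⟩ (Metric.ball_mem_nhds _ (half_pos hc))
  have hnear_θ : ∀ᶠ x' in 𝓝[K] x, dist (φ (x', θ)) (φ (x, θ)) < c / 2 :=
    (hφ.comp (continuousOn_id.prodMk continuousOn_const) fun _ hx' => ⟨hx', hθ⟩) x hx
      (Metric.ball_mem_nhds _ (half_pos hc))
  rw [eventually_nhdsWithin_iff] at hnear hnear_θ
  filter_upwards [continuous_swap.continuousAt.eventually hnear,
    continuous_snd.continuousAt.eventually hnear_θ, continuous_fst.continuousAt.eventually hU]
    with z hz hzθ hzU hzK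
  calc ‖φ (z.2, z.1) - φ (z.2, θ)‖
      ≤ dist (φ (z.2, z.1)) (φ (x, θ)) + dist (φ (z.2, θ)) (φ (x, θ)) := by
        rw [← dist_eq_norm]; exact dist_triangle_right _ _ _
    _ < c / 2 + c / 2 := add_lt_add (hz ⟨hzK, hzU⟩) (hzθ hzK)
    _ = c := add_halves c

section Calculus

variable {E F G : Type*} [NormedAddCommGroup E] [NormedSpace ℝ E] [NormedAddCommGroup F]
  [NormedSpace ℝ F] [NormedAddCommGroup G] [NormedSpace ℝ G] {g : E → F → G}
  {s K : Set E} {U : Set F} {θ : F}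

theorem ContDiffOn.uncurry_left {n : WithTop ℕ∞} (hg : ContDiffOn ℝ n (uncurry g) (s ×ˢ U))
    {x : E} (hx : x ∈ s) : ContDiffOn ℝ n (g x) U :=
  hg.comp (contDiffOn_const.prodMk contDiffOn_id) fun _ ht => ⟨hx, ht⟩

theorem ContDiffOn.continuousOn_fderiv_uncurry (hU : IsOpen U)
    (hg : ContDiffOn ℝ 1 (uncurry g) (s ×ˢ U)) :
    ContinuousOn (fun q : E × F => fderiv ℝ (g q.1) q.2) (s ×ˢ U) := by
  intro q hq
  -- differentiate `t ↦ g q.1 t` with `q` as a parameter: only `U` needs unique derivatives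
  have hparam : ContDiffWithinAt ℝ 1 (uncurry fun q' : E × F => g q'.1) ((s ×ˢ U) ×ˢ U)
      (q, q.2) :=
    (hg q hq).comp (q, q.2) ((contDiff_fst.comp contDiff_fst).prodMk contDiff_snd).contDiffWithinAt
      fun r (hr : r ∈ (s ×ˢ U) ×ˢ U) => ⟨hr.1.1, hr.2⟩
  have hcont := (hparam.fderivWithin (m := 0) contDiffWithinAt_snd hU.uniqueDiffOn (by simp) hq
    fun r hr => hr.2).continuousWithinAt
  exact hcont.congr (fun r hr => (fderivWithin_of_isOpen hU hr.2).symm)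
    (fderivWithin_of_isOpen hU hq.2).symm

theorem ContDiffOn.isLittleO_sub_sub_fderiv_uncurry (hK : IsCompact K) (hU : IsOpen U)
    (hθ : θ ∈ U) (hg : ContDiffOn ℝ 1 (uncurry g) (K ×ˢ U)) :
    (fun q : F × E => g q.2 (θ + q.1) - g q.2 θ - fderiv ℝ (g q.2) θ q.1)
      =o[𝓝 0 ×ˢ 𝓟 K] Prod.fst := by
  refine isLittleO_iff.2 fun c hc => eventually_prod_principal_iff.2 ?_
  have hclose := hK.eventually_forall_norm_sub_lt (hU.mem_nhds hθ)
    (hg.continuousOn_fderiv_uncurry hU) hc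
  obtain ⟨r, hr, hball⟩ := Metric.mem_nhds_iff.1 (hclose.and (hU.mem_nhds hθ))
  filter_upwards [Metric.ball_mem_nhds 0 hr] with w hw x hx
  have hdiff : ∀ t ∈ Metric.ball θ r, DifferentiableAt ℝ (g x) t := fun t ht =>
    ((hg.uncurry_left hx).differentiableOn one_ne_zero t (hball ht).2).differentiableAt
      (hU.mem_nhds (hball ht).2)
  have hmvt := (convex_ball θ r).norm_image_sub_le_of_norm_fderiv_le' hdiff
    (fun t ht => ((hball ht).1 x hx).le) (Metric.mem_ball_self hr)
    (by simpa using hw : θ + w ∈ Metric.ball θ r)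
  simpa using hmvt

end Calculus

theorem hasFDerivAt_log_of_hasFDerivAt_sqrt {F : Type*} [NormedAddCommGroup F]
    [NormedSpace ℝ F] {φ : F → ℝ} {φ' : F →L[ℝ] ℝ} {θ : F}
    (h : HasFDerivAt (fun t => Real.sqrt (φ t)) φ' θ) (hpos : ∀ᶠ t in 𝓝 θ, 0 < φ t) :
    HasFDerivAt (fun t => Real.log (φ t)) ((2 * (Real.sqrt (φ θ))⁻¹) • φ') θ := by
  have hlog := (h.log (Real.sqrt_pos.2 hpos.self_of_nhds).ne').const_mul 2
  rw [smul_smul] at hlog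
  refine hlog.congr_of_eventuallyEq ?_
  filter_upwards [hpos] with t ht
  rw [Real.log_sqrt ht.le]
  ring

theorem tendsto_inv_sqrt_smul {E : Type*} [NormedAddCommGroup E] [NormedSpace ℝ E] (h : E) :
    Tendsto (fun n : ℕ => (Real.sqrt n)⁻¹ • h) atTop (𝓝 0) := by
  have hinv : Tendsto (fun n : ℕ => (Real.sqrt n)⁻¹) atTop (𝓝 0) :=
    tendsto_inv_atTop_zero.comp (Real.tendsto_sqrt_atTop.comp tendsto_natCast_atTop_atTop)
  simpa using hinv.smul_const h

theorem tendsto_sum_Icc_inv_sqrt_smul_of_isLittleO {α E F : Type*} [NormedAddCommGroup E]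
    [NormedSpace ℝ E] [NormedAddCommGroup F] {D : E → α → F} {K : Set α}
    (hD : (fun q : E × α => D q.1 q.2) =o[𝓝 0 ×ˢ 𝓟 K] fun q => ‖q.1‖ ^ 2)
    {x : ℕ → α} (hx : ∀ i, x i ∈ K) (h : E) :
    Tendsto (fun n : ℕ => ∑ i ∈ Finset.Icc 1 n, D ((Real.sqrt n)⁻¹ • h) (x i)) atTop (𝓝 0) := by
  refine NormedAddGroup.tendsto_nhds_zero.2 fun a ha => ?_
  set c := a / (‖h‖ ^ 2 + 1)
  have hc : 0 < c := by positivity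
  have hsmall : ∀ᶠ n : ℕ in atTop, ∀ i,
      ‖D ((Real.sqrt n)⁻¹ • h) (x i)‖ ≤ c * ‖(Real.sqrt n)⁻¹ • h‖ ^ 2 :=
    (tendsto_inv_sqrt_smul h).eventually (eventually_prod_principal_iff.1 (hD.def hc)) |>.mono
      fun n hn i => by simpa using hn (x i) (hx i)
  filter_upwards [hsmall, eventually_ge_atTop 1] with n hn hn1
  have hn0 : (0 : ℝ) < n := by exact_mod_cast hn1
  have hnorm : ‖(Real.sqrt n)⁻¹ • h‖ ^ 2 = ‖h‖ ^ 2 / n := by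
    rw [norm_smul, mul_pow, norm_inv, Real.norm_eq_abs, inv_pow, sq_abs,
      Real.sq_sqrt hn0.le, inv_mul_eq_div]
  calc ‖∑ i ∈ Finset.Icc 1 n, D ((Real.sqrt n)⁻¹ • h) (x i)‖
      ≤ ∑ i ∈ Finset.Icc 1 n, c * (‖h‖ ^ 2 / n) :=
        norm_sum_le_of_le _ fun i _ => hnorm ▸ hn i
    _ = c * ‖h‖ ^ 2 := by
        rw [Finset.sum_const, Nat.card_Icc, nsmul_eq_mul, add_tsub_cancel_right]
        field_simp
    _ < a := by
        rw [div_mul_eq_mul_div, div_lt_iff₀ (by positivity)]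
        exact mul_lt_mul_of_pos_left (lt_add_one _) ha

theorem ContinuousOn.measurable_comp {α β γ : Type*} [MeasurableSpace α] [TopologicalSpace β]
    [MeasurableSpace β] [OpensMeasurableSpace β] [TopologicalSpace γ] [MeasurableSpace γ]
    [BorelSpace γ] {φ : β → γ} {s : Set β} (hφ : ContinuousOn φ s) {X : α → β}
    (hX : Measurable X) (hXs : ∀ a, X a ∈ s) : Measurable fun a => φ (X a) :=
  hφ.domRestrict.measurable.comp (hX.subtype_mk (h := hXs))

theorem tendstoInMeasure_of_tendsto_ae_of_eventually {α E : Type*} [MeasurableSpace α]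
    {μ : Measure α} [IsFiniteMeasure μ] [PseudoMetricSpace E] {f : ℕ → α → E} {g : α → E}
    (hf : ∀ᶠ n in atTop, AEStronglyMeasurable (f n) μ)
    (hfg : ∀ᵐ x ∂μ, Tendsto (fun n => f n x) atTop (𝓝 (g x))) :
    TendstoInMeasure μ f atTop g := by
  obtain ⟨N, hN⟩ := eventually_atTop.1 hf
  have hshift : TendstoInMeasure μ (fun n => f (n + N)) atTop g :=
    tendstoInMeasure_of_tendsto_ae (fun n => hN _ (Nat.le_add_left N n))
      (hfg.mono fun x hx => hx.comp (tendsto_add_atTop_nat N))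
  exact fun ε hε => (tendsto_add_atTop_iff_nat N).1 (hshift ε hε)

noncomputable def rootDensity {p : ℕ} {Y : Type*} (f : (Fin p → ℝ) → ℝ → Y → ℝ) (y : Y) (x : ℝ)
    (t : Fin p → ℝ) : ℝ :=
  Real.sqrt (f t x y)

theorem scoreDir_eq {p : ℕ} {Y : Type*} {f : (Fin p → ℝ) → ℝ → Y → ℝ} {θ : Fin p → ℝ}
    {x : ℝ} {y : Y}
    (hd : DifferentiableAt ℝ (rootDensity f y x) θ) (hpos : ∀ᶠ t in 𝓝 θ, 0 < f t x y)
    (v : Fin p → ℝ) :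
    scoreDir f θ v x y = 2 * (rootDensity f y x θ)⁻¹ * fderiv ℝ (rootDensity f y x) θ v := by
  rw [scoreDir, (hasFDerivAt_log_of_hasFDerivAt_sqrt hd.hasFDerivAt hpos).fderiv]
  rfl

section Model

variable {p : ℕ} {Y : Type*} [Fintype Y] {f : (Fin p → ℝ) → ℝ → Y → ℝ} {s : Set ℝ}
  {U : Set (Fin p → ℝ)} {θ : Fin p → ℝ}

theorem eqOn_DqmFin (hU : IsOpen U) (hθ : θ ∈ U)
    (hpos : ∀ t ∈ U, ∀ x ∈ s, ∀ y, 0 < f t x y)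
    (hsmooth : ∀ y, ContDiffOn ℝ 1 (uncurry (rootDensity f y)) (s ×ˢ U))
    (w : Fin p → ℝ) :
    Set.EqOn (DqmFin f θ w) (fun x => ∑ y, (rootDensity f y x (θ + w) - rootDensity f y x θ
      - fderiv ℝ (rootDensity f y x) θ w) ^ 2) s := by
  intro x hx
  refine Finset.sum_congr rfl fun y _ => ?_
  have hd : DifferentiableAt ℝ (rootDensity f y x) θ :=
    (((hsmooth y).uncurry_left hx).differentiableOn one_ne_zero θ hθ).differentiableAt
      (hU.mem_nhds hθ)
  have hne : Real.sqrt (f θ x y) ≠ 0 := (Real.sqrt_pos.2 (hpos θ hθ x hx y)).ne'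
  rw [scoreDir_eq hd (eventually_of_mem (hU.mem_nhds hθ) fun t ht => hpos t ht x hx y)]
  simp only [rootDensity]
  field_simp

theorem isLittleO_DqmFin {K : Set ℝ} (hK : IsCompact K) (hKs : K ⊆ s) (hU : IsOpen U)
    (hθ : θ ∈ U) (hpos : ∀ t ∈ U, ∀ x ∈ s, ∀ y, 0 < f t x y)
    (hsmooth : ∀ y, ContDiffOn ℝ 1 (uncurry (rootDensity f y)) (s ×ˢ U)) :
    (fun q : (Fin p → ℝ) × ℝ => DqmFin f θ q.1 q.2) =o[𝓝 0 ×ˢ 𝓟 K] fun q => ‖q.1‖ ^ 2 := by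
  have hrem := fun y =>
    ((hsmooth y).mono (Set.prod_mono hKs subset_rfl)).isLittleO_sub_sub_fderiv_uncurry hK hU hθ
  refine (IsLittleO.fun_sum (s := Finset.univ) fun y _ => (hrem y).norm_right.pow two_pos).congr'
    ?_ (Eventually.of_forall fun q => rfl)
  refine eventually_prod_principal_iff.2 (Eventually.of_forall fun w x hx => ?_)
  exact (eqOn_DqmFin hU hθ hpos hsmooth w (hKs hx)).symm

theorem continuousOn_DqmFin (hU : IsOpen U) (hθ : θ ∈ U)
    (hpos : ∀ t ∈ U, ∀ x ∈ s, ∀ y, 0 < f t x y)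
    (hsmooth : ∀ y, ContDiffOn ℝ 1 (uncurry (rootDensity f y)) (s ×ˢ U))
    {w : Fin p → ℝ} (hw : θ + w ∈ U) : ContinuousOn (DqmFin f θ w) s := by
  have hslice : ∀ t ∈ U, Set.MapsTo (fun x : ℝ => (x, t)) s (s ×ˢ U) := fun t ht x hx => ⟨hx, ht⟩
  have hcont : ∀ y, ContinuousOn (fun x => rootDensity f y x (θ + w) - rootDensity f y x θ
      - fderiv ℝ (rootDensity f y x) θ w) s := fun y =>
    (((hsmooth y).continuousOn.comp (continuousOn_id.prodMk continuousOn_const) (hslice _ hw)).sub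
      ((hsmooth y).continuousOn.comp (continuousOn_id.prodMk continuousOn_const) (hslice _ hθ))).sub
      ((((hsmooth y).continuousOn_fderiv_uncurry hU).comp
        (continuousOn_id.prodMk continuousOn_const) (hslice _ hθ)).clm_apply continuousOn_const)
  exact (continuousOn_finsetSum _ fun y _ => (hcont y).pow 2).congr
    (eqOn_DqmFin hU hθ hpos hsmooth w)

end Model

theorem stmt_5_general {p : ℕ} (Y : Type*) [Fintype Y]
    (f : (Fin p → ℝ) → ℝ → Y → ℝ)
    (𝒳 : Set ℝ) (Θ₀ : Set (Fin p → ℝ))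
    (hpos : ∀ θ ∈ Θ₀, ∀ x ∈ 𝒳, ∀ y : Y, 0 < f θ x y)
    (hsmooth : ∀ y : Y,
      ContDiffOn ℝ 2 (fun q : ℝ × (Fin p → ℝ) => Real.sqrt (f q.2 q.1 y)) (𝒳 ×ˢ Θ₀))
    {Ω : Type*} [MeasurableSpace Ω] (P : Measure Ω) [IsProbabilityMeasure P]
    (X : ℕ → Ω → ℝ) (hXm : ∀ i, Measurable (X i)) (hXin : ∀ i ω, X i ω ∈ 𝒳)
    (γ : ℝ) (hγ : γ ∈ 𝒳)
    (hXconv : ∀ᵐ ω ∂P, Tendsto (fun i => X i ω) atTop (nhds γ))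
    (θ : Fin p → ℝ) (hθ : θ ∈ interior Θ₀) (h : Fin p → ℝ) :
    (∀ᵐ ω ∂P,
      Tendsto (fun n : ℕ => ∑ i ∈ Finset.Icc 1 n, DqmFin f θ ((Real.sqrt n)⁻¹ • h) (X i ω))
        atTop (nhds 0)) ∧
    TendstoInMeasure P
      (fun (n : ℕ) ω => ∑ i ∈ Finset.Icc 1 n, DqmFin f θ ((Real.sqrt n)⁻¹ • h) (X i ω))
      atTop (fun _ => 0) := by
  have hposU : ∀ t ∈ interior Θ₀, ∀ x ∈ 𝒳, ∀ y, 0 < f t x y :=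
    fun t ht => hpos t (interior_subset ht)
  have hsmoothU : ∀ y, ContDiffOn ℝ 1 (uncurry (rootDensity f y)) (𝒳 ×ˢ interior Θ₀) := fun y =>
    ((hsmooth y).of_le one_le_two).mono (Set.prod_mono subset_rfl interior_subset)
  have hae : ∀ᵐ ω ∂P,
      Tendsto (fun n : ℕ => ∑ i ∈ Finset.Icc 1 n, DqmFin f θ ((Real.sqrt n)⁻¹ • h) (X i ω))
        atTop (nhds 0) := by
    filter_upwards [hXconv] with ω hω
    have hK𝒳 : insert γ (Set.range fun i => X i ω) ⊆ 𝒳 :=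
      Set.insert_subset hγ (Set.range_subset_iff.2 fun i => hXin i ω)
    exact tendsto_sum_Icc_inv_sqrt_smul_of_isLittleO
      (isLittleO_DqmFin hω.isCompact_insert_range hK𝒳 isOpen_interior hθ hposU hsmoothU)
      (fun i => Set.mem_insert_of_mem _ ⟨i, rfl⟩) h
  refine ⟨hae, tendstoInMeasure_of_tendsto_ae_of_eventually ?_ hae⟩
  have hnear : ∀ᶠ n : ℕ in atTop, θ + (Real.sqrt n)⁻¹ • h ∈ interior Θ₀ := by
    have := (tendsto_inv_sqrt_smul h).const_add θ
    rw [add_zero] at this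
    exact this.eventually (isOpen_interior.mem_nhds hθ)
  filter_upwards [hnear] with n hn
  exact (Finset.measurable_sum _ fun i _ =>
    (continuousOn_DqmFin isOpen_interior hθ hposU hsmoothU hn).measurable_comp (hXm i)
      (hXin i)).aestronglyMeasurable

/-- For outcomes with finite support, covariates `X_i → γ ∈ 𝒳` almost surely (`𝒳 ⊆ ℝ`
not necessarily compact), compact `Θ₀ ⊆ Θ ⊆ ℝ^p`, positive densities, and
`(x,θ) ↦ √f_θ(y|x)` twice continuously differentiable on `𝒳 × Θ₀`: for any `θ` in the
interior of `Θ₀` and any `h`, `∑_{i=1}^n D_{θ,h/√n}(X_i) → 0` almost surely; in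
particular, it converges to `0` in probability. -/
theorem stmt_5 {p : ℕ} (Y : Type*) [Fintype Y] [Nonempty Y]
    (f : (Fin p → ℝ) → ℝ → Y → ℝ)
    (𝒳 : Set ℝ) (Θ Θ₀ : Set (Fin p → ℝ)) (hΘ : Θ₀ ⊆ Θ) (hΘ₀c : IsCompact Θ₀)
    (hdens : ∀ θ ∈ Θ₀, ∀ x ∈ 𝒳, ∑ y : Y, f θ x y = 1)
    (hpos : ∀ θ ∈ Θ₀, ∀ x ∈ 𝒳, ∀ y : Y, 0 < f θ x y)
    (hsmooth : ∀ y : Y,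
      ContDiffOn ℝ 2 (fun q : ℝ × (Fin p → ℝ) => Real.sqrt (f q.2 q.1 y)) (𝒳 ×ˢ Θ₀))
    {Ω : Type*} [MeasurableSpace Ω] (P : Measure Ω) [IsProbabilityMeasure P]
    (X : ℕ → Ω → ℝ) (hXm : ∀ i, Measurable (X i)) (hXin : ∀ i ω, X i ω ∈ 𝒳)
    (γ : ℝ) (hγ : γ ∈ 𝒳)
    (hXconv : ∀ᵐ ω ∂P, Tendsto (fun i => X i ω) atTop (nhds γ))
    (θ : Fin p → ℝ) (hθ : θ ∈ interior Θ₀) (h : Fin p → ℝ) :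
    (∀ᵐ ω ∂P,
      Tendsto (fun n : ℕ => ∑ i ∈ Finset.Icc 1 n, DqmFin f θ ((Real.sqrt n)⁻¹ • h) (X i ω))
        atTop (nhds 0)) ∧
    TendstoInMeasure P
      (fun (n : ℕ) ω => ∑ i ∈ Finset.Icc 1 n, DqmFin f θ ((Real.sqrt n)⁻¹ • h) (X i ω))
      atTop (fun _ => 0) :=
  stmt_5_general Y f 𝒳 Θ₀ hpos hsmooth P X hXm hXin γ hγ hXconv θ hθ h
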